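/- Let 0 < ε ≤ 1 and 0 < λ ≤ ε/3, let x ∈ ℝᵈ, and let s_x ∈ S be a segment achieving the minimum of dist(x, s) over s ∈ S. Then for every z ∈ C^λ(x, φ(x)), dist(z, s_x) ≤ (1 + ε)·min_{s ∈ S} dist(z, s); that is, the nearest segment of x is a (1+ε)-approximate nearest neighbor of z. -/

import Mathlib

noncomputable section

open Metric Set MeasureTheory
open scoped InnerProductSpace Classical

variable {d n : ℕ}

/-- The capsule `C_s(x,r)` induced by a single segment `s = [a,b]` with unit
direction vector `v`.  If the nearest point of `s` to `x` is an endpoint, it is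
the closed ball of radius `max r (dist x s)`; otherwise it is the intersection
of the infinite closed cylinder of radius `max r (dist x s)` whose axis is the
line through `x` parallel to `v` with the closed ball of radius
`max r (min ‖x-a‖ ‖x-b‖)`. -/
def capsuleSeg (a b v x : EuclideanSpace ℝ (Fin d)) (r : ℝ) :
    Set (EuclideanSpace ℝ (Fin d)) :=
  if Metric.infDist x (segment ℝ a b) = min (dist x a) (dist x b) then
    Metric.closedBall x (max r (Metric.infDist x (segment ℝ a b)))
  else
    {y | ‖(y - x) - ⟪y - x, v⟫_ℝ • v‖ ≤ max r (Metric.infDist x (segment ℝ a b))} ∩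
      Metric.closedBall x (max r (min (dist x a) (dist x b)))

/-- The capsule `C(x,r)` of the family of segments `s i = [a i, b i]`. -/
def capsuleFam (a b v : Fin n → EuclideanSpace ℝ (Fin d))
    (x : EuclideanSpace ℝ (Fin d)) (r : ℝ) : Set (EuclideanSpace ℝ (Fin d)) :=
  ⋂ i, capsuleSeg (a i) (b i) (v i) x r

/-- Image of a set under the homothety (central scaling) centered at `x` with ratio `lam`. -/
def scaleAbout (x : EuclideanSpace ℝ (Fin d)) (lam : ℝ)
    (C : Set (EuclideanSpace ℝ (Fin d))) : Set (EuclideanSpace ℝ (Fin d)) :=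
  (AffineMap.homothety x lam) '' C

/-- Local feature size: the distance from `x` to its second-nearest segment. -/
def lfs (a b : Fin n → EuclideanSpace ℝ (Fin d)) (x : EuclideanSpace ℝ (Fin d)) : ℝ :=
  sInf {t | ∃ i j : Fin n, i < j ∧
    t = max (Metric.infDist x (segment ℝ (a i) (b i)))
            (Metric.infDist x (segment ℝ (a j) (b j)))}

/-- `D_i(x)`: half the squared distance from `x` to the segment `[a,b]`. -/
def Dseg (a b x : EuclideanSpace ℝ (Fin d)) : ℝ :=
  Metric.infDist x (segment ℝ a b) ^ 2 / 2

/-- `D•_i(x)`: half the squared distance from `x` to the nearest endpoint. -/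
def Dbullet (a b x : EuclideanSpace ℝ (Fin d)) : ℝ :=
  min (dist x a ^ 2) (dist x b ^ 2) / 2

/-- The quadratic form `w ↦ wᵀ H_i(x) w` of the local tensor
`H_i(x) = (1/D_i(x))(I - v vᵀ) + (1/D•_i(x)) v vᵀ`. -/
def tensorQ (a b v x w : EuclideanSpace ℝ (Fin d)) : ℝ :=
  (1 / Dseg a b x) * (‖w‖ ^ 2 - ⟪w, v⟫_ℝ ^ 2) + (1 / Dbullet a b x) * ⟪w, v⟫_ℝ ^ 2

/-- The local ellipsoid `E_i(x) = {y | ½ (y-x)ᵀ H_i(x) (y-x) ≤ 1}`. -/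
def localEllipsoid (a b v x : EuclideanSpace ℝ (Fin d)) :
    Set (EuclideanSpace ℝ (Fin d)) :=
  {y | tensorQ a b v x (y - x) / 2 ≤ 1}

/-- `Ê(x)`: the intersection of the local ellipsoids of all segments. -/
def hatE (a b v : Fin n → EuclideanSpace ℝ (Fin d)) (x : EuclideanSpace ℝ (Fin d)) :
    Set (EuclideanSpace ℝ (Fin d)) :=
  ⋂ i, localEllipsoid (a i) (b i) (v i) x

/-- `Ẽ(x)`: the ellipsoid of the blended tensor `H(x) = ∑ i, H_i(x)`. -/
def tildeE (a b v : Fin n → EuclideanSpace ℝ (Fin d)) (x : EuclideanSpace ℝ (Fin d)) :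
    Set (EuclideanSpace ℝ (Fin d)) :=
  {y | (∑ i, tensorQ (a i) (b i) (v i) x (y - x)) / 2 ≤ 1}

/-!
Write `z = x + λ (y - x)` with `y ∈ C(x, φ(x))` and `δ_i = dist(x, s_i)`. The capsule keeps `z`
close to the nearest segment, `dist(z, s_x) ≤ (1 + λ) φ(x)`, and away from every other one,
`dist(z, s_j) ≥ (1 - λ) δ_j ≥ (1 - λ) φ(x)`; and `1 + λ ≤ (1 + ε)(1 - λ)` because `3λ ≤ ε ≤ 1`.
Both bounds are computed in coordinates along and across the direction of the segment. The only
delicate case is the upper bound when `z` projects beyond an endpoint `e` of `s_x`: there the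
ball constraint `‖y - x‖ ≤ ‖x - e‖` bounds the overshoot by `λ √(δ² - p²)`, where `p` is the
transverse part of `y - x`.
-/

open AffineMap

section LineCoordinates

variable {E : Type*} [NormedAddCommGroup E] [InnerProductSpace ℝ E] {v : E}

theorem norm_sq_eq_norm_sub_inner_smul_sq_add_sq (hv : ‖v‖ = 1) (u : E) :
    ‖u‖ ^ 2 = ‖u - ⟪u, v⟫_ℝ • v‖ ^ 2 + ⟪u, v⟫_ℝ ^ 2 := by
  rw [norm_sub_sq_real, real_inner_smul_right, norm_smul, hv, Real.norm_eq_abs, mul_one, sq_abs]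
  ring

theorem norm_sub_add_smul_sq (hv : ‖v‖ = 1) (u a : E) (t : ℝ) :
    ‖u - (a + t • v)‖ ^ 2 = ‖(u - a) - ⟪u - a, v⟫_ℝ • v‖ ^ 2 + (⟪u - a, v⟫_ℝ - t) ^ 2 := by
  have hcoord : ⟪u - (a + t • v), v⟫_ℝ = ⟪u - a, v⟫_ℝ - t := by
    rw [sub_add_eq_sub_sub, inner_sub_left, real_inner_smul_left, real_inner_self_eq_norm_sq, hv]
    ring
  rw [norm_sq_eq_norm_sub_inner_smul_sq_add_sq hv, hcoord,
    show u - (a + t • v) - (⟪u - a, v⟫_ℝ - t) • v = (u - a) - ⟪u - a, v⟫_ℝ • v by module]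

variable {a b : E}

theorem segment_eq_image_add_smul (hdir : b - a = ‖b - a‖ • v) :
    segment ℝ a b = (fun t : ℝ => a + t • v) '' Icc 0 ‖b - a‖ := by
  set L := ‖b - a‖
  have hIcc : Icc 0 L = (fun θ : ℝ => θ * L) '' Icc 0 1 := by
    rw [image_mul_right_Icc zero_le_one (norm_nonneg _), zero_mul, one_mul]
  rw [segment_eq_image', hIcc, image_image, hdir]
  simp only [smul_smul]

theorem sub_eq_norm_smul_neg (hdir : b - a = ‖b - a‖ • v) : a - b = ‖a - b‖ • -v := by
  rw [norm_sub_rev, smul_neg, ← hdir, neg_sub]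

theorem inner_sub_neg_eq_norm_sub_inner (hv : ‖v‖ = 1) (hdir : b - a = ‖b - a‖ • v) (u : E) :
    ⟪u - b, -v⟫_ℝ = ‖b - a‖ - ⟪u - a, v⟫_ℝ := by
  set L := ‖b - a‖
  rw [show u - b = (u - a) - (b - a) by abel, hdir, inner_neg_right, inner_sub_left,
    real_inner_smul_left, real_inner_self_eq_norm_sq, hv]
  ring

theorem norm_sub_inner_smul_le_infDist_segment (hv : ‖v‖ = 1) (hdir : b - a = ‖b - a‖ • v)
    (u : E) : ‖(u - a) - ⟪u - a, v⟫_ℝ • v‖ ≤ infDist u (segment ℝ a b) := by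
  rw [le_infDist ⟨a, left_mem_segment ℝ a b⟩, segment_eq_image_add_smul hdir]
  rintro _ ⟨t, -, rfl⟩
  rw [dist_eq_norm, ← sq_le_sq₀ (norm_nonneg _) (norm_nonneg _), norm_sub_add_smul_sq hv]
  exact le_add_of_nonneg_right (sq_nonneg _)

theorem dist_le_infDist_segment_of_inner_nonpos (hv : ‖v‖ = 1) (hdir : b - a = ‖b - a‖ • v)
    {u : E} (hu : ⟪u - a, v⟫_ℝ ≤ 0) : dist u a ≤ infDist u (segment ℝ a b) := by
  rw [le_infDist ⟨a, left_mem_segment ℝ a b⟩, segment_eq_image_add_smul hdir]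
  rintro _ ⟨t, ht, rfl⟩
  have hua := norm_sub_add_smul_sq hv u a 0
  rw [zero_smul, add_zero] at hua
  rw [dist_eq_norm, dist_eq_norm, ← sq_le_sq₀ (norm_nonneg _) (norm_nonneg _), hua,
    norm_sub_add_smul_sq hv]
  nlinarith [ht.1]

theorem inner_mem_Icc_of_infDist_segment_ne_min (hv : ‖v‖ = 1) (hdir : b - a = ‖b - a‖ • v)
    {u : E} (hu : infDist u (segment ℝ a b) ≠ min (dist u a) (dist u b)) :
    ⟪u - a, v⟫_ℝ ∈ Icc 0 ‖b - a‖ := by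
  have hle : infDist u (segment ℝ a b) ≤ min (dist u a) (dist u b) :=
    le_min (infDist_le_dist_of_mem (left_mem_segment ℝ a b))
      (infDist_le_dist_of_mem (right_mem_segment ℝ a b))
  refine ⟨?_, ?_⟩ <;> by_contra! h <;> refine hu (le_antisymm hle ?_)
  · exact (min_le_left _ _).trans (dist_le_infDist_segment_of_inner_nonpos hv hdir h.le)
  · have hb := dist_le_infDist_segment_of_inner_nonpos ((norm_neg v).trans hv)
      (sub_eq_norm_smul_neg hdir) (u := u)
      (by rw [inner_sub_neg_eq_norm_sub_inner hv hdir]; linarith)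
    rw [segment_symm] at hb
    exact (min_le_right _ _).trans hb

theorem infDist_segment_eq_of_inner_mem_Icc (hv : ‖v‖ = 1) (hdir : b - a = ‖b - a‖ • v)
    {u : E} (hu : ⟪u - a, v⟫_ℝ ∈ Icc 0 ‖b - a‖) :
    infDist u (segment ℝ a b) = ‖(u - a) - ⟪u - a, v⟫_ℝ • v‖ := by
  refine le_antisymm ?_ (norm_sub_inner_smul_le_infDist_segment hv hdir u)
  have hmem : a + ⟪u - a, v⟫_ℝ • v ∈ segment ℝ a b := by
    rw [segment_eq_image_add_smul hdir]
    exact mem_image_of_mem _ hu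
  refine (infDist_le_dist_of_mem hmem).trans_eq ?_
  rw [dist_eq_norm, sub_add_eq_sub_sub]

end LineCoordinates

section Homothety

variable {E : Type*} [NormedAddCommGroup E] [InnerProductSpace ℝ E] {v : E}

theorem homothety_sub (x y a : E) (r : ℝ) : homothety x r y - a = (x - a) + r • (y - x) := by
  rw [homothety_apply, vsub_eq_sub, vadd_eq_add]
  abel

theorem inner_homothety_sub (x y a : E) (r : ℝ) :
    ⟪homothety x r y - a, v⟫_ℝ = ⟪x - a, v⟫_ℝ + r * ⟪y - x, v⟫_ℝ := by
  rw [homothety_sub, inner_add_left, real_inner_smul_left]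

theorem abs_infDist_homothety_sub_le (s : Set E) (x y : E) {r : ℝ} (hr : 0 ≤ r) :
    |infDist (homothety x r y) s - infDist x s| ≤ r * dist y x := by
  have h := (lipschitz_infDist_pt s).dist_le_mul (homothety x r y) x
  rwa [Real.dist_eq, NNReal.coe_one, one_mul, dist_comm, dist_center_homothety,
    Real.norm_of_nonneg hr, dist_comm] at h

theorem abs_norm_sub_inner_smul_homothety_sub_le (x y a : E) {r : ℝ} (hr : 0 ≤ r) :
    |‖(homothety x r y - a) - ⟪homothety x r y - a, v⟫_ℝ • v‖ - ‖(x - a) - ⟪x - a, v⟫_ℝ • v‖|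
      ≤ r * ‖(y - x) - ⟪y - x, v⟫_ℝ • v‖ := by
  have h : (homothety x r y - a) - ⟪homothety x r y - a, v⟫_ℝ • v - ((x - a) - ⟪x - a, v⟫_ℝ • v)
      = r • ((y - x) - ⟪y - x, v⟫_ℝ • v) := by
    rw [inner_homothety_sub, homothety_sub]
    module
  refine (abs_norm_sub_norm_le _ _).trans_eq ?_
  rw [h, norm_smul, Real.norm_of_nonneg hr]

end Homothety

/-- Coordinates relative to an endpoint `e`: `δ`, `p`, `P` are the transverse parts of `x - e`,
`y - x`, `z - e`, while `c` and `-T` are the axial parts of `x - e` and `y - x`, so that `r T - c`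
is the overshoot of `z = x + r (y - x)` beyond `e`. -/
theorem sq_add_sq_overshoot_le {r φ δ p P c T : ℝ} (hr0 : 0 ≤ r) (hr1 : r ≤ 1) (hδ0 : 0 ≤ δ)
    (hδ : δ ≤ φ) (hp0 : 0 ≤ p) (hp : p ≤ φ) (hc : 0 ≤ c) (hT : p ^ 2 + T ^ 2 ≤ δ ^ 2 + c ^ 2)
    (hP0 : 0 ≤ P) (hP : P ≤ δ + r * p) (hcT : c ≤ r * T) :
    P ^ 2 + (r * T - c) ^ 2 ≤ ((1 + r) * φ) ^ 2 := by
  have hover : (r * T - c) ^ 2 ≤ r ^ 2 * (δ ^ 2 - p ^ 2) := by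
    nlinarith [mul_nonneg hc (sub_nonneg.mpr hcT), mul_nonneg (sq_nonneg c) (sub_nonneg.mpr hr1),
      mul_le_mul_of_nonneg_left hT (sq_nonneg r)]
  have hPsq : P ^ 2 ≤ (δ + r * p) ^ 2 := pow_le_pow_left₀ hP0 hP 2
  nlinarith [mul_le_mul hδ hp hp0 (hδ0.trans hδ), mul_le_mul hδ hδ hδ0 (hδ0.trans hδ),
    mul_nonneg hr0 (mul_nonneg hδ0 hp0)]

section Segment

variable {E : Type*} [NormedAddCommGroup E] [InnerProductSpace ℝ E] {a b v x y : E} {r φ : ℝ}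

theorem infDist_homothety_le_of_inner_le (hv : ‖v‖ = 1) (hdir : b - a = ‖b - a‖ • v)
    (hr0 : 0 ≤ r) (hr1 : r ≤ 1) (hx : ⟪x - a, v⟫_ℝ ∈ Icc 0 ‖b - a‖)
    (hxφ : infDist x (segment ℝ a b) ≤ φ) (hyφ : ‖(y - x) - ⟪y - x, v⟫_ℝ • v‖ ≤ φ)
    (hya : dist y x ≤ dist x a) (hz : ⟪homothety x r y - a, v⟫_ℝ ≤ ‖b - a‖) :
    infDist (homothety x r y) (segment ℝ a b) ≤ (1 + r) * φ := by
  have hφ0 : 0 ≤ φ := infDist_nonneg.trans hxφ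
  rw [infDist_segment_eq_of_inner_mem_Icc hv hdir hx] at hxφ
  have hzx := (abs_le.mp (abs_norm_sub_inner_smul_homothety_sub_le (v := v) x y a hr0)).2
  have hζ := inner_homothety_sub (v := v) x y a r
  have hza := norm_sq_eq_norm_sub_inner_smul_sq_add_sq hv (homothety x r y - a)
  have hyx := norm_sq_eq_norm_sub_inner_smul_sq_add_sq hv (y - x)
  have hxa := norm_sq_eq_norm_sub_inner_smul_sq_add_sq hv (x - a)
  rw [← dist_eq_norm (homothety x r y) a] at hza
  rw [← dist_eq_norm y x] at hyx
  rw [← dist_eq_norm x a] at hxa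
  set z := homothety x r y
  set P := ‖(z - a) - ⟪z - a, v⟫_ℝ • v‖
  rcases le_or_gt 0 ⟪z - a, v⟫_ℝ with hz0 | hz0
  · rw [infDist_segment_eq_of_inner_mem_Icc hv hdir ⟨hz0, hz⟩]
    nlinarith [mul_le_mul_of_nonneg_left hyφ hr0]
  -- `z` projects beyond `a`, which is then the point of the segment nearest to `z`
  refine (infDist_le_dist_of_mem (left_mem_segment ℝ a b)).trans ?_
  rw [← sq_le_sq₀ dist_nonneg (by positivity), hza, hζ,
    show ⟪x - a, v⟫_ℝ + r * ⟪y - x, v⟫_ℝ = -(r * -⟪y - x, v⟫_ℝ - ⟪x - a, v⟫_ℝ) by ring, neg_sq]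
  exact sq_add_sq_overshoot_le hr0 hr1 (norm_nonneg _) hxφ (norm_nonneg _) hyφ hx.1
    (by nlinarith [pow_le_pow_left₀ dist_nonneg hya 2]) (norm_nonneg _) (by linarith)
    (by linarith)

theorem infDist_homothety_le_of_dist_le_min (hv : ‖v‖ = 1) (hdir : b - a = ‖b - a‖ • v)
    (hr0 : 0 ≤ r) (hr1 : r ≤ 1) (hx : ⟪x - a, v⟫_ℝ ∈ Icc 0 ‖b - a‖)
    (hxφ : infDist x (segment ℝ a b) ≤ φ) (hyφ : ‖(y - x) - ⟪y - x, v⟫_ℝ • v‖ ≤ φ)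
    (hy : dist y x ≤ min (dist x a) (dist x b)) :
    infDist (homothety x r y) (segment ℝ a b) ≤ (1 + r) * φ := by
  rcases le_or_gt ⟪homothety x r y - a, v⟫_ℝ ‖b - a‖ with hz | hz
  · exact infDist_homothety_le_of_inner_le hv hdir hr0 hr1 hx hxφ hyφ
      (hy.trans (min_le_left _ _)) hz
  -- otherwise `z` lies beyond `b`: run the same argument from the other end
  have hb := infDist_homothety_le_of_inner_le ((norm_neg v).trans hv) (sub_eq_norm_smul_neg hdir)
    hr0 hr1 (x := x) (y := y) (φ := φ)
    (by
      rw [inner_sub_neg_eq_norm_sub_inner hv hdir, norm_sub_rev]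
      constructor <;> linarith [hx.1, hx.2])
    (by rwa [segment_symm])
    (by rwa [inner_neg_right, neg_smul_neg])
    (hy.trans (min_le_right _ _))
    (by rw [inner_sub_neg_eq_norm_sub_inner hv hdir, norm_sub_rev]; linarith [norm_nonneg (b - a)])
  rwa [segment_symm] at hb

end Segment

section Capsule

variable {a b v x y : EuclideanSpace ℝ (Fin d)} {r φ : ℝ}

theorem infDist_homothety_le_of_mem_capsuleSeg (hv : ‖v‖ = 1) (hdir : b - a = ‖b - a‖ • v)
    (hr0 : 0 ≤ r) (hr1 : r ≤ 1) (hxφ : infDist x (segment ℝ a b) ≤ φ)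
    (hy : y ∈ capsuleSeg a b v x φ) :
    infDist (homothety x r y) (segment ℝ a b) ≤ (1 + r) * φ := by
  have hnear (h : dist y x ≤ φ) : infDist (homothety x r y) (segment ℝ a b) ≤ (1 + r) * φ := by
    have := (abs_le.mp (abs_infDist_homothety_sub_le (segment ℝ a b) x y hr0)).2
    nlinarith [mul_le_mul_of_nonneg_left h hr0]
  unfold capsuleSeg at hy
  split_ifs at hy with hend
  · rw [mem_closedBall, max_eq_left hxφ] at hy
    exact hnear hy
  obtain ⟨hperp, hball⟩ := hy
  rw [mem_ofPred_eq, max_eq_left hxφ] at hperp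
  rw [mem_closedBall, le_max_iff] at hball
  rcases hball with h | h
  · exact hnear h
  · exact infDist_homothety_le_of_dist_le_min hv hdir hr0 hr1
      (inner_mem_Icc_of_infDist_segment_ne_min hv hdir hend) hxφ hperp h

theorem mul_infDist_le_infDist_homothety_of_mem_capsuleSeg (hv : ‖v‖ = 1)
    (hdir : b - a = ‖b - a‖ • v) (hr0 : 0 ≤ r) (hφx : φ ≤ infDist x (segment ℝ a b))
    (hy : y ∈ capsuleSeg a b v x φ) :
    (1 - r) * infDist x (segment ℝ a b) ≤ infDist (homothety x r y) (segment ℝ a b) := by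
  unfold capsuleSeg at hy
  split_ifs at hy with hend
  · rw [mem_closedBall, max_eq_right hφx] at hy
    have := (abs_le.mp (abs_infDist_homothety_sub_le (segment ℝ a b) x y hr0)).1
    nlinarith [mul_le_mul_of_nonneg_left hy hr0]
  obtain ⟨hperp, -⟩ := hy
  rw [mem_ofPred_eq, max_eq_right hφx] at hperp
  have hxs := infDist_segment_eq_of_inner_mem_Icc hv hdir
    (inner_mem_Icc_of_infDist_segment_ne_min hv hdir hend)
  have hzx := (abs_le.mp (abs_norm_sub_inner_smul_homothety_sub_le (v := v) x y a hr0)).1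
  have hz := norm_sub_inner_smul_le_infDist_segment hv hdir (homothety x r y)
  nlinarith [mul_le_mul_of_nonneg_left hperp hr0]

end Capsule

section LocalFeatureSize

variable {a b : Fin n → EuclideanSpace ℝ (Fin d)} {x : EuclideanSpace ℝ (Fin d)} {k : Fin n}

theorem infDist_le_lfs (hn : 2 ≤ n)
    (hk : ∀ i, infDist x (segment ℝ (a k) (b k)) ≤ infDist x (segment ℝ (a i) (b i))) :
    infDist x (segment ℝ (a k) (b k)) ≤ lfs a b x := by
  refine le_csInf ⟨_, ⟨0, by omega⟩, ⟨1, by omega⟩, Fin.mk_lt_mk.mpr one_pos, rfl⟩ ?_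
  rintro _ ⟨i, j, -, rfl⟩
  exact (hk i).trans (le_max_left _ _)

theorem lfs_le_infDist
    (hk : ∀ i, infDist x (segment ℝ (a k) (b k)) ≤ infDist x (segment ℝ (a i) (b i)))
    {i : Fin n} (hi : i ≠ k) : lfs a b x ≤ infDist x (segment ℝ (a i) (b i)) := by
  have hbdd : BddBelow {t | ∃ i j : Fin n, i < j ∧
      t = max (infDist x (segment ℝ (a i) (b i))) (infDist x (segment ℝ (a j) (b j)))} :=
    ⟨0, by rintro _ ⟨i, j, -, rfl⟩; exact infDist_nonneg.trans (le_max_left _ _)⟩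
  rcases hi.lt_or_gt with h | h
  · exact (csInf_le hbdd ⟨i, k, h, rfl⟩).trans_eq (max_eq_left (hk i))
  · exact (csInf_le hbdd ⟨k, i, h, rfl⟩).trans_eq (max_eq_right (hk i))

end LocalFeatureSize

theorem nearest_of_center_is_ann_general {d n : ℕ} (hn : 2 ≤ n)
    (a b v : Fin n → EuclideanSpace ℝ (Fin d))
    (hv : ∀ i, ‖v i‖ = 1)
    (hdir : ∀ i, b i - a i = ‖b i - a i‖ • v i)
    (eps : ℝ) (heps1 : eps ≤ 1)
    (lam : ℝ) (hlam0 : 0 < lam) (hlam : lam ≤ eps / 3)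
    (x : EuclideanSpace ℝ (Fin d))
    (kx : Fin n)
    (hkx : ∀ i, Metric.infDist x (segment ℝ (a kx) (b kx)) ≤
      Metric.infDist x (segment ℝ (a i) (b i)))
    (z : EuclideanSpace ℝ (Fin d))
    (hz : z ∈ scaleAbout x lam (capsuleFam a b v x (lfs a b x))) :
    Metric.infDist z (segment ℝ (a kx) (b kx)) ≤
      (1 + eps) * ⨅ i : Fin n, Metric.infDist z (segment ℝ (a i) (b i)) := by
  obtain ⟨y, hy, rfl⟩ := hz
  rw [capsuleFam, mem_iInter] at hy
  have hupper := infDist_homothety_le_of_mem_capsuleSeg (hv kx) (hdir kx) hlam0.le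
    (by linarith) (infDist_le_lfs hn hkx) (hy kx)
  have hφ0 : 0 ≤ lfs a b x := infDist_nonneg.trans (infDist_le_lfs hn hkx)
  have hfactor : 1 + lam ≤ (1 + eps) * (1 - lam) := by nlinarith
  have : Nonempty (Fin n) := ⟨kx⟩
  rw [Real.mul_iInf_of_nonneg (by linarith)]
  refine le_ciInf fun j => ?_
  rcases eq_or_ne j kx with rfl | hj
  · exact le_mul_of_one_le_left infDist_nonneg (by linarith)
  have hφj := lfs_le_infDist hkx hj
  calc _ ≤ (1 + lam) * lfs a b x := hupper
    _ ≤ (1 + eps) * ((1 - lam) * lfs a b x) := by nlinarith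
    _ ≤ (1 + eps) * ((1 - lam) * infDist x (segment ℝ (a j) (b j))) :=
      mul_le_mul_of_nonneg_left (mul_le_mul_of_nonneg_left hφj (by linarith)) (by linarith)
    _ ≤ _ := mul_le_mul_of_nonneg_left
      (mul_infDist_le_infDist_homothety_of_mem_capsuleSeg (hv j) (hdir j) hlam0.le hφj (hy j))
      (by linarith)

/-- For `0 < ε ≤ 1` and `0 < λ ≤ ε/3`, if `s_x` is a nearest
segment of `x`, then for every `z ∈ C^λ(x, φ(x))`,
`dist(z, s_x) ≤ (1+ε)·min_{s ∈ S} dist(z, s)`. -/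
theorem nearest_of_center_is_ann {d n : ℕ} (hd : 1 ≤ d) (hn : 2 ≤ n)
    (a b v : Fin n → EuclideanSpace ℝ (Fin d))
    (hab : ∀ i, a i ≠ b i)
    (hv : ∀ i, ‖v i‖ = 1)
    (hdir : ∀ i, b i - a i = ‖b i - a i‖ • v i)
    (hdisj : ∀ i j, i ≠ j → Disjoint (segment ℝ (a i) (b i)) (segment ℝ (a j) (b j)))
    (eps : ℝ) (heps0 : 0 < eps) (heps1 : eps ≤ 1)
    (lam : ℝ) (hlam0 : 0 < lam) (hlam : lam ≤ eps / 3)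
    (x : EuclideanSpace ℝ (Fin d))
    (kx : Fin n)
    (hkx : ∀ i, Metric.infDist x (segment ℝ (a kx) (b kx)) ≤
      Metric.infDist x (segment ℝ (a i) (b i)))
    (z : EuclideanSpace ℝ (Fin d))
    (hz : z ∈ scaleAbout x lam (capsuleFam a b v x (lfs a b x))) :
    Metric.infDist z (segment ℝ (a kx) (b kx)) ≤
      (1 + eps) * ⨅ i : Fin n, Metric.infDist z (segment ℝ (a i) (b i)) :=
  nearest_of_center_is_ann_general hn a b v hv hdir eps heps1 lam hlam0 hlam x kx hkx z hz
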